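/- arXiv:1810.09396 — 3 statements merged into one kernel-verified Lean document; each statement's English description precedes it below -/
import Mathlib

section
/- Let S be a sector in ℂ and let φ : S → ℂ be a nonconstant holomorphic function that admits a formal power series φ̂ = Σ_{j=0}^∞ a_j z^j as asymptotic expansion on S, where a_j ≠ 0 for some j ≥ 1. Then the invariance group of φ is finite; that is, the set of germs at 0 of holomorphic functions f, each defined on some open neighborhood U of 0 (depending on f) and satisfying f(0) = 0, f'(0) ≠ 0, f(S ∩ U) ⊆ S ∩ U, and φ(f(z)) = φ(z) for all z ∈ S ∩ U, is a finite subset of the space of germs at 0 of ℂ-valued functions. -/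
open Topology

/-- `S` is a sector with vertex at the origin. -/
def IsSector (S : Set ℂ) : Prop :=
  ∃ R α₁ α₂ : ℝ, 0 < R ∧ α₁ < α₂ ∧
    S = {z : ℂ | 0 < ‖z‖ ∧ ‖z‖ < R ∧ α₁ < z.arg ∧ z.arg < α₂}

/-- `φ` admits the formal power series with coefficients `a` as asymptotic
expansion on `S`. -/
def AsympExpOn (φ : ℂ → ℂ) (S : Set ℂ) (a : ℕ → ℂ) : Prop :=
  ∀ k : ℕ, ∃ A : ℝ, 0 < A ∧ ∀ z ∈ S,
    ‖φ z - ∑ j ∈ Finset.range k, a j * z ^ j‖ ≤ A * ‖z‖ ^ k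

/-!
Along `𝓝[S] 0` the expansion gives `φ z - a 0 ~ a m * z ^ m`, where `m ≥ 1` is the first index
with `a m ≠ 0`. If `φ ∘ f = φ` and `f z ~ c z`, comparing leading terms gives `c ^ m = 1`, so the
linear parts of the invariance germs are `m`-th roots of unity. Two germs `f`, `g` with the same
linear part `c` coincide: otherwise `f - g = z ^ k * ψ` with `ψ 0 ≠ 0`. For the truncation `P` of
the expansion at order `k + m`, the invariance gives `P ∘ f - P ∘ g = O(z ^ (k + m))`, whereas
`P ∘ f - P ∘ g = (f - g) * (m * a m * c ^ (m - 1) * z ^ (m - 1) + o(z ^ (m - 1)))` has exact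
order `k + m - 1`.
-/

open Filter Finset Asymptotics

lemma IsSector.zero_notMem {S : Set ℂ} (hS : IsSector S) : (0 : ℂ) ∉ S := by
  obtain ⟨R, α₁, α₂, -, -, rfl⟩ := hS
  simp

lemma IsSector.ofReal_mul_mem {S : Set ℂ} (hS : IsSector S) {z : ℂ} (hz : z ∈ S) {t : ℝ}
    (ht₀ : 0 < t) (ht₁ : t ≤ 1) : (t : ℂ) * z ∈ S := by
  obtain ⟨R, α₁, α₂, -, -, rfl⟩ := hS
  obtain ⟨h₁, h₂, h₃, h₄⟩ := hz
  have hnorm : ‖(t : ℂ) * z‖ = t * ‖z‖ := by simp [abs_of_pos ht₀]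
  refine ⟨?_, ?_, ?_, ?_⟩
  · rw [hnorm]; positivity
  · rw [hnorm]; nlinarith
  · rwa [Complex.arg_real_mul z ht₀]
  · rwa [Complex.arg_real_mul z ht₀]

lemma IsSector.nhdsWithin_neBot {S : Set ℂ} (hS : IsSector S) (hne : S.Nonempty) :
    (𝓝[S] (0 : ℂ)).NeBot := by
  obtain ⟨z, hz⟩ := hne
  rw [← mem_closure_iff_nhdsWithin_neBot]
  have hray : Tendsto (fun t : ℝ => (t : ℂ) * z) (𝓝[>] 0) (𝓝 0) := by
    have : Continuous fun t : ℝ => (t : ℂ) * z := by fun_prop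
    simpa using this.tendsto 0 |>.mono_left nhdsWithin_le_nhds
  refine mem_closure_of_tendsto hray ?_
  filter_upwards [Ioc_mem_nhdsGT one_pos] with t ht using hS.ofReal_mul_mem hz ht.1 ht.2

lemma IsSector.nhdsWithin_le_nhdsNE {S : Set ℂ} (hS : IsSector S) : 𝓝[S] (0 : ℂ) ≤ 𝓝[≠] 0 :=
  nhdsWithin_mono _ fun _ hz h => hS.zero_notMem (h ▸ hz)

def IsAsymptoticExpansion (φ : ℂ → ℂ) (a : ℕ → ℂ) (l : Filter ℂ) : Prop :=
  ∀ k, (fun z => φ z - ∑ j ∈ range k, a j * z ^ j) =O[l] (· ^ k)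

lemma AsympExpOn.isAsymptoticExpansion {φ : ℂ → ℂ} {S : Set ℂ} {a : ℕ → ℂ}
    (h : AsympExpOn φ S a) : IsAsymptoticExpansion φ a (𝓝[S] 0) := fun k => by
  obtain ⟨A, -, hA⟩ := h k
  exact .of_bound A (eventually_nhdsWithin_of_forall fun z hz => by simpa using hA z hz)

section Expansion

variable {φ : ℂ → ℂ} {a : ℕ → ℂ} {l : Filter ℂ} {m : ℕ}

lemma sum_range_succ_eq_of_eq_zero (hm : 1 ≤ m) (hmin : ∀ j, 1 ≤ j → j < m → a j = 0) (z : ℂ) :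
    ∑ j ∈ range (m + 1), a j * z ^ j = a 0 + a m * z ^ m := by
  rw [sum_range_succ, sum_eq_single_of_mem 0 (mem_range.2 hm) fun j hj hj0 => by
    rw [hmin j (Nat.one_le_iff_ne_zero.2 hj0) (mem_range.1 hj), zero_mul]]
  simp

lemma IsAsymptoticExpansion.isEquivalent (hφ : IsAsymptoticExpansion φ a l) (hl : l ≤ 𝓝 0)
    (hm : 1 ≤ m) (ham : a m ≠ 0) (hmin : ∀ j, 1 ≤ j → j < m → a j = 0) :
    (fun z => φ z - a 0) ~[l] fun z => a m * z ^ m := by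
  refine IsLittleO.isEquivalent ?_
  have hrem : (fun z => φ z - a 0) - (fun z => a m * z ^ m) =
      fun z => φ z - ∑ j ∈ range (m + 1), a j * z ^ j := by
    ext z; simp [sum_range_succ_eq_of_eq_zero hm hmin, sub_sub]
  rw [hrem]
  exact (hφ (m + 1)).trans_isLittleO <|
    ((isLittleO_pow_pow m.lt_succ_self).mono hl).trans_isBigO (isBigO_self_const_mul ham _ _)

lemma tendsto_div_self_of_differentiableAt {f : ℂ → ℂ} (hf : DifferentiableAt ℂ f 0)
    (hf₀ : f 0 = 0) :
    Tendsto (fun z => f z / z) (𝓝[≠] 0) (𝓝 (deriv f 0)) :=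
  (hasDerivAt_iff_tendsto_slope.mp hf.hasDerivAt).congr fun z => by simp [slope_def_field, hf₀]

lemma IsAsymptoticExpansion.deriv_pow_eq_one (hφ : IsAsymptoticExpansion φ a l) [l.NeBot]
    (hl : l ≤ 𝓝[≠] 0) (hm : 1 ≤ m) (ham : a m ≠ 0) (hmin : ∀ j, 1 ≤ j → j < m → a j = 0)
    {f : ℂ → ℂ} (hf : DifferentiableAt ℂ f 0) (hf₀ : f 0 = 0) (hfl : Tendsto f l l)
    (hinv : φ ∘ f =ᶠ[l] φ) : deriv f 0 ^ m = 1 := by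
  have hlead := hφ.isEquivalent (hl.trans nhdsWithin_le_nhds) hm ham hmin
  have hequiv : (fun z => a m * f z ^ m) ~[l] fun z => a m * z ^ m :=
    ((hlead.comp_tendsto hfl).symm.congr_right
      (hinv.fun_comp (· - a 0))).trans hlead
  have hne : ∀ᶠ z in l, z ≠ 0 := hl self_mem_nhdsWithin
  have hone : Tendsto (fun z => (f z / z) ^ m) l (𝓝 1) := by
    refine ((isEquivalent_iff_tendsto_one ?_).1 hequiv).congr' ?_
    · filter_upwards [hne] with z hz using mul_ne_zero ham (pow_ne_zero m hz)
    · filter_upwards [hne] with z hz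
      simp only [Pi.div_apply, div_pow]
      field_simp
  exact tendsto_nhds_unique
    (((tendsto_div_self_of_differentiableAt hf hf₀).mono_left hl).pow m) hone

/-- For the truncation `P = ∑ j < n, a j X ^ j` with `a j = 0` for `0 < j < m`, this is
`(P (z * u) - P (z * v)) / (z ^ m * (u - v))`; see `sum_sub_sum_eq_pow_mul`. -/
def truncDivDiff (a : ℕ → ℂ) (m n : ℕ) (z u v : ℂ) : ℂ :=
  ∑ j ∈ range n, a j * (z ^ (j - m) * ∑ i ∈ range j, u ^ i * v ^ (j - 1 - i))

lemma tendsto_truncDivDiff {α : Type*} {l : Filter α} {n : ℕ} {z u v : α → ℂ} {z₀ u₀ v₀ : ℂ}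
    (hz : Tendsto z l (𝓝 z₀)) (hu : Tendsto u l (𝓝 u₀)) (hv : Tendsto v l (𝓝 v₀)) :
    Tendsto (fun x => truncDivDiff a m n (z x) (u x) (v x)) l
      (𝓝 (truncDivDiff a m n z₀ u₀ v₀)) :=
  tendsto_finsetSum _ fun _ _ => tendsto_const_nhds.mul <| (hz.pow _).mul <|
    tendsto_finsetSum _ fun _ _ => (hu.pow _).mul (hv.pow _)

lemma sum_sub_sum_eq_pow_mul (hmin : ∀ j, 1 ≤ j → j < m → a j = 0) (n : ℕ)
    (z u v : ℂ) :
    ∑ j ∈ range n, a j * (z * u) ^ j - ∑ j ∈ range n, a j * (z * v) ^ j =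
      z ^ m * (u - v) * truncDivDiff a m n z u v := by
  rw [truncDivDiff, ← sum_sub_distrib, mul_sum]
  refine sum_congr rfl fun j _ => ?_
  rcases le_or_gt m j with hj | hj
  · rw [mul_pow, mul_pow, ← mul_sub, ← mul_sub, ← geom_sum₂_mul u v j,
      ← Nat.add_sub_cancel' hj, pow_add, Nat.add_sub_cancel_left]
    ring
  · rcases Nat.eq_zero_or_pos j with rfl | hj₀
    · simp
    · simp [hmin j hj₀ hj]

lemma truncDivDiff_zero_self (hmin : ∀ j, 1 ≤ j → j < m → a j = 0)
    {n : ℕ} (hmn : m < n) (c : ℂ) :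
    truncDivDiff a m n 0 c c = a m * (m * c ^ (m - 1)) := by
  rw [truncDivDiff, sum_eq_single_of_mem m (mem_range.2 hmn) fun j _ hjm => ?_]
  · simp [geom_sum₂_self]
  rcases lt_or_gt_of_ne hjm with hj | hj
  · rcases Nat.eq_zero_or_pos j with rfl | hj₀
    · simp
    · simp [hmin j hj₀ hj]
  · simp [Nat.sub_ne_zero_of_lt hj]

lemma sum_sub_sum_eq_pow_mul_truncDivDiff (hmin : ∀ j, 1 ≤ j → j < m + 1 → a j = 0)
    (n k : ℕ) {x y w z : ℂ} (hz : z ≠ 0) (hxy : x - y = z ^ k * w) :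
    ∑ j ∈ range n, a j * x ^ j - ∑ j ∈ range n, a j * y ^ j =
      z ^ (k + m) * (w * truncDivDiff a (m + 1) n z (x / z) (y / z)) := by
  have hsub : x / z - y / z = z ^ k * w / z := by rw [← sub_div, hxy]
  have hpow : z ^ (m + 1) * (z ^ k * w / z) = z ^ (k + m) * w := by
    field_simp
    ring
  have := sum_sub_sum_eq_pow_mul hmin n z (x / z) (y / z)
  rw [mul_div_cancel₀ _ hz, mul_div_cancel₀ _ hz, hsub, hpow] at this
  rw [this, mul_assoc]

lemma eq_zero_of_tendsto_of_pow_mul_isBigO [l.NeBot] (hl : l ≤ 𝓝[≠] 0) {w : ℂ → ℂ} {w₀ : ℂ}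
    (hw : Tendsto w l (𝓝 w₀)) {r : ℕ} (h : (fun z => z ^ r * w z) =O[l] fun z => z ^ (r + 1)) :
    w₀ = 0 := by
  have hwz : w =O[l] id := by
    obtain ⟨C, hC⟩ := h.bound
    refine .of_bound C ?_
    filter_upwards [hC, hl self_mem_nhdsWithin] with z hz hz₀
    have hpos : 0 < ‖z‖ ^ r := pow_pos (norm_pos_iff.2 hz₀) r
    rw [norm_mul, norm_pow, norm_pow, pow_succ, mul_left_comm] at hz
    exact le_of_mul_le_mul_left hz hpos
  exact tendsto_nhds_unique hw
    (hwz.trans_tendsto (tendsto_id.mono_left (hl.trans nhdsWithin_le_nhds)))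

lemma IsAsymptoticExpansion.isBigO_comp (hφ : IsAsymptoticExpansion φ a l) (hl : l ≤ 𝓝 0)
    {f : ℂ → ℂ} (hf : DifferentiableAt ℂ f 0) (hf₀ : f 0 = 0) (hfl : Tendsto f l l) (k : ℕ) :
    (fun z => φ (f z) - ∑ j ∈ range k, a j * f z ^ j) =O[l] (· ^ k) := by
  have hfz : f =O[l] fun z => z := by
    simpa [hf₀] using hf.hasDerivAt.isBigO_sub.mono hl
  exact ((hφ k).comp_tendsto hfl).trans (hfz.pow k)

lemma IsAsymptoticExpansion.isBigO_sum_sub_sum (hφ : IsAsymptoticExpansion φ a l)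
    (hl : l ≤ 𝓝 0) {f g : ℂ → ℂ}
    (hf : DifferentiableAt ℂ f 0) (hf₀ : f 0 = 0) (hfl : Tendsto f l l) (hfinv : φ ∘ f =ᶠ[l] φ)
    (hg : DifferentiableAt ℂ g 0) (hg₀ : g 0 = 0) (hgl : Tendsto g l l) (hginv : φ ∘ g =ᶠ[l] φ)
    (n : ℕ) :
    (fun z => ∑ j ∈ range n, a j * f z ^ j - ∑ j ∈ range n, a j * g z ^ j) =O[l] (· ^ n) := by
  refine ((hφ.isBigO_comp hl hg hg₀ hgl n).sub (hφ.isBigO_comp hl hf hf₀ hfl n)).congr' ?_ .rfl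
  filter_upwards [hfinv, hginv] with z hfz hgz
  simp only [Function.comp_apply] at hfz hgz
  rw [hfz, hgz]
  ring

lemma IsAsymptoticExpansion.eventuallyEq_of_deriv_eq (hφ : IsAsymptoticExpansion φ a l)
    [l.NeBot] (hl : l ≤ 𝓝[≠] 0) (hm : 1 ≤ m) (ham : a m ≠ 0)
    (hmin : ∀ j, 1 ≤ j → j < m → a j = 0) {f g : ℂ → ℂ}
    (hf : AnalyticAt ℂ f 0) (hf₀ : f 0 = 0) (hfl : Tendsto f l l) (hfinv : φ ∘ f =ᶠ[l] φ)
    (hg : AnalyticAt ℂ g 0) (hg₀ : g 0 = 0) (hgl : Tendsto g l l) (hginv : φ ∘ g =ᶠ[l] φ)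
    (hfg : deriv f 0 = deriv g 0) (hc : deriv f 0 ≠ 0) : f =ᶠ[𝓝 0] g := by
  have hl₀ : l ≤ 𝓝 0 := hl.trans nhdsWithin_le_nhds
  by_cases htop : analyticOrderAt (f - g) 0 = ⊤
  · exact (analyticOrderAt_eq_top.1 htop).mono fun z hz => sub_eq_zero.1 hz
  obtain ⟨k, hk⟩ := ENat.ne_top_iff_exists.1 htop
  obtain ⟨ψ, hψ, hψ₀, hfgψ⟩ := (hf.sub hg).analyticOrderAt_eq_natCast.1 hk.symm
  obtain ⟨m, rfl⟩ := Nat.exists_eq_add_of_le' hm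
  set c := deriv f 0
  have hk₀ : k ≠ 0 := by
    rintro rfl
    exact hψ₀ (by simpa [hf₀, hg₀, eq_comm] using hfgψ.self_of_nhds)
  have hfactor : (fun z => ∑ j ∈ range (k + m + 1), a j * f z ^ j -
      ∑ j ∈ range (k + m + 1), a j * g z ^ j) =ᶠ[l]
      fun z => z ^ (k + m) * (ψ z * truncDivDiff a (m + 1) (k + m + 1) z (f z / z) (g z / z)) := by
    filter_upwards [hfgψ.filter_mono hl₀, hl self_mem_nhdsWithin] with z hz hz₀
    exact sum_sub_sum_eq_pow_mul_truncDivDiff hmin _ k hz₀ (by simpa using hz)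
  have hdiv : ∀ {h : ℂ → ℂ}, AnalyticAt ℂ h 0 → h 0 = 0 →
      Tendsto (fun z => h z / z) l (𝓝 (deriv h 0)) := fun hh hh₀ =>
    (tendsto_div_self_of_differentiableAt hh.differentiableAt hh₀).mono_left hl
  have hlim : Tendsto (fun z => ψ z * truncDivDiff a (m + 1) (k + m + 1) z (f z / z) (g z / z)) l
      (𝓝 (ψ 0 * truncDivDiff a (m + 1) (k + m + 1) 0 c c)) :=
    (hψ.continuousAt.tendsto.mono_left hl₀).mul <| tendsto_truncDivDiff
      (tendsto_id.mono_left hl₀) (hdiv hf hf₀) (hfg ▸ hdiv hg hg₀)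
  have hzero := eq_zero_of_tendsto_of_pow_mul_isBigO hl hlim (r := k + m) <|
    (hφ.isBigO_sum_sub_sum hl₀ hf.differentiableAt hf₀ hfl hfinv hg.differentiableAt hg₀ hgl
      hginv _).congr' hfactor .rfl
  rw [truncDivDiff_zero_self hmin (by omega) c] at hzero
  simp [hψ₀, ham, hc, Nat.cast_add_one_ne_zero] at hzero

end Expansion

noncomputable def germDeriv {x : ℂ} (G : (𝓝 x).Germ ℂ) : ℂ :=
  G.liftOn (fun f => deriv f x) fun _ _ h => h.deriv_eq

lemma invariant_along_nhdsWithin_of_mapsTo {S U : Set ℂ} {φ f : ℂ → ℂ} (hU : IsOpen U) (hU₀ : 0 ∈ U)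
    (hf : DifferentiableOn ℂ f U) (hf₀ : f 0 = 0) (hmap : ∀ z ∈ S ∩ U, f z ∈ S ∩ U)
    (hinv : ∀ z ∈ S ∩ U, φ (f z) = φ z) :
    AnalyticAt ℂ f 0 ∧ Tendsto f (𝓝[S] 0) (𝓝[S] 0) ∧ φ ∘ f =ᶠ[𝓝[S] 0] φ := by
  have hSU : S ∩ U ∈ 𝓝[S] (0 : ℂ) := inter_mem_nhdsWithin S (hU.mem_nhds hU₀)
  have hfa : AnalyticAt ℂ f 0 := hf.analyticAt (hU.mem_nhds hU₀)
  refine ⟨hfa, tendsto_nhdsWithin_iff.2 ⟨?_, ?_⟩, ?_⟩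
  · simpa [hf₀] using hfa.continuousAt.tendsto.mono_left nhdsWithin_le_nhds
  · filter_upwards [hSU] with z hz using (hmap z hz).1
  · filter_upwards [hSU] with z hz using hinv z hz

theorem invariance_group_finite_general (S : Set ℂ) (φ : ℂ → ℂ) (a : ℕ → ℂ)
    (hS : IsSector S)
    (hnonconst : ∃ z ∈ S, ∃ w ∈ S, φ z ≠ φ w)
    (hasymp : AsympExpOn φ S a) (hnonzero : ∃ j : ℕ, 1 ≤ j ∧ a j ≠ 0) :
    {G : (𝓝 (0 : ℂ)).Germ ℂ | ∃ (U : Set ℂ) (f : ℂ → ℂ),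
      IsOpen U ∧ (0 : ℂ) ∈ U ∧ DifferentiableOn ℂ f U ∧ f 0 = 0 ∧ deriv f 0 ≠ 0 ∧
      (∀ z ∈ S ∩ U, f z ∈ S ∩ U) ∧ (∀ z ∈ S ∩ U, φ (f z) = φ z) ∧
      G = (f : (𝓝 (0 : ℂ)).Germ ℂ)}.Finite := by
  obtain ⟨z₀, hz₀, -⟩ := hnonconst
  have := hS.nhdsWithin_neBot ⟨z₀, hz₀⟩
  have hL := hS.nhdsWithin_le_nhdsNE
  have hφ := hasymp.isAsymptoticExpansion
  obtain ⟨hm, ham⟩ := Nat.find_spec hnonzero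
  have hmin : ∀ j, 1 ≤ j → j < Nat.find hnonzero → a j = 0 := fun j hj₁ hj =>
    not_not.1 fun h => Nat.find_min hnonzero hj ⟨hj₁, h⟩
  refine Set.Finite.of_finite_image (f := germDeriv) ((Polynomial.nthRootsFinset
    (Nat.find hnonzero) (1 : ℂ)).finite_toSet.subset ?_) ?_
  · rintro _ ⟨_, ⟨U, f, hU, hU₀, hf, hf₀, -, hmap, hinv, rfl⟩, rfl⟩
    obtain ⟨hfa, hfL, hfinv⟩ := invariant_along_nhdsWithin_of_mapsTo hU hU₀ hf hf₀ hmap hinv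
    rw [Finset.mem_coe, Polynomial.mem_nthRootsFinset (by omega)]
    exact hφ.deriv_pow_eq_one hL hm ham hmin hfa.differentiableAt hf₀ hfL hfinv
  · rintro _ ⟨U, f, hU, hU₀, hf, hf₀, hc, hfmap, hfinv, rfl⟩
      _ ⟨V, g, hV, hV₀, hg, hg₀, -, hgmap, hginv, rfl⟩ hfg
    obtain ⟨hfa, hfL, hfinv⟩ := invariant_along_nhdsWithin_of_mapsTo hU hU₀ hf hf₀ hfmap hfinv
    obtain ⟨hga, hgL, hginv⟩ := invariant_along_nhdsWithin_of_mapsTo hV hV₀ hg hg₀ hgmap hginv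
    exact Filter.Germ.coe_eq.2 <| hφ.eventuallyEq_of_deriv_eq hL hm ham hmin
      hfa hf₀ hfL hfinv hga hg₀ hgL hginv hfg hc

/-- The invariance group of a nonconstant holomorphic function `φ` on a sector `S`
admitting a nonzero asymptotic expansion is finite: the set of germs at `0` of
holomorphic functions `f` fixing `0`, with `f'(0) ≠ 0`, leaving `S` invariant near
`0` and satisfying `φ ∘ f = φ` near `0` in `S`, is finite. -/
theorem invariance_group_finite (S : Set ℂ) (φ : ℂ → ℂ) (a : ℕ → ℂ)
    (hS : IsSector S) (hφ : DifferentiableOn ℂ φ S)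
    (hnonconst : ∃ z ∈ S, ∃ w ∈ S, φ z ≠ φ w)
    (hasymp : AsympExpOn φ S a) (hnonzero : ∃ j : ℕ, 1 ≤ j ∧ a j ≠ 0) :
    {G : (𝓝 (0 : ℂ)).Germ ℂ | ∃ (U : Set ℂ) (f : ℂ → ℂ),
      IsOpen U ∧ (0 : ℂ) ∈ U ∧ DifferentiableOn ℂ f U ∧ f 0 = 0 ∧ deriv f 0 ≠ 0 ∧
      (∀ z ∈ S ∩ U, f z ∈ S ∩ U) ∧ (∀ z ∈ S ∩ U, φ (f z) = φ z) ∧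
      G = (f : (𝓝 (0 : ℂ)).Germ ℂ)}.Finite :=
  invariance_group_finite_general S φ a hS hnonconst hasymp hnonzero
end

section
/- Let φ̂ = Σ_{j=1}^∞ a_j z^j ∈ ℂ[[z]] be a nonzero formal power series with zero constant coefficient, and let ν = min{j ≥ 1 : a_j ≠ 0}. Then the formal invariance group Inv(φ̂) = {ĝ ∈ ℂ[[z]] : ĝ has zero constant coefficient, ĝ has nonzero linear coefficient, and φ̂ ∘ ĝ = φ̂} is a finite set, and it has exactly ν elements. -/
/-- Formal substitution `f ∘ g` of a power series `g` (intended to have zero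
constant coefficient) into a power series `f`. -/
noncomputable def pscomp (f g : PowerSeries ℂ) : PowerSeries ℂ :=
  PowerSeries.mk fun n =>
    ∑ k ∈ Finset.range (n + 1), (PowerSeries.coeff k f) * (PowerSeries.coeff n (g ^ k))

/-!
Let `a_ν` be the first nonzero coefficient of `φ` and `c` the linear coefficient of `g`.
Comparing coefficients of `z^ν` in `φ ∘ g = φ` gives `a_ν c^ν = a_ν`, so `c^ν = 1`.
If `g ≡ g' mod z^(m+1)` with `m ≥ 1`, then `φ ∘ g ≡ φ ∘ g' mod z^(ν+m)`, and the coefficients of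
`z^(ν+m)` differ by `ν a_ν c^(ν-1) (g_{m+1} - g'_{m+1})`, where `ν a_ν c^(ν-1) ≠ 0`.
Hence an invariant `g` is determined by `c`, and for every `ν`-th root of unity `c` its
coefficients can be solved for one degree at a time. So `g ↦ g'(0)` is a bijection from the
invariance group onto the `ν`-th roots of unity.
-/

namespace PowerSeries

variable {R : Type*} [CommRing R]

theorem coeff_add_mul_of_X_pow_dvd {f g : R⟦X⟧} {a b : ℕ} (hf : X ^ a ∣ f) (hg : X ^ b ∣ g) :
    coeff (a + b) (f * g) = coeff a f * coeff b g := by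
  obtain ⟨f, rfl⟩ := hf
  obtain ⟨g, rfl⟩ := hg
  rw [mul_mul_mul_comm, ← pow_add]
  simp [coeff_X_pow_mul']

theorem X_dvd_iff_coeff_zero {f : R⟦X⟧} : X ∣ f ↔ coeff 0 f = 0 := by
  rw [X_dvd_iff, coeff_zero_eq_constantCoeff_apply]

theorem X_pow_add_dvd_pow_mul_pow {g g' : R⟦X⟧} (hg : X ∣ g) (hg' : X ∣ g') (i j : ℕ) :
    X ^ (i + j) ∣ g' ^ i * g ^ j := by
  rw [pow_add]
  exact mul_dvd_mul (pow_dvd_pow_of_dvd hg' i) (pow_dvd_pow_of_dvd hg j)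

theorem coeff_self_pow_of_X_dvd {g : R⟦X⟧} (hg : X ∣ g) (k : ℕ) :
    coeff k (g ^ k) = coeff 1 g ^ k := by
  induction k with
  | zero => simp
  | succ k ih =>
    rw [pow_succ, coeff_add_mul_of_X_pow_dvd (pow_dvd_pow_of_dvd hg k) (by rwa [pow_one]), ih,
      pow_succ]

theorem X_pow_dvd_geom_sum₂ {g g' : R⟦X⟧} (hg : X ∣ g) (hg' : X ∣ g') (k : ℕ) :
    X ^ k ∣ ∑ i ∈ Finset.range (k + 1), g' ^ i * g ^ (k + 1 - 1 - i) :=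
  Finset.dvd_sum fun i hi => by
    simpa [Nat.add_sub_cancel' (Finset.mem_range_succ_iff.1 hi)] using
      X_pow_add_dvd_pow_mul_pow hg hg' i (k - i)

theorem X_pow_dvd_pow_sub_pow {g g' : R⟦X⟧} {m : ℕ} (hg : X ∣ g) (hg' : X ∣ g')
    (hgg' : X ^ (m + 1) ∣ g' - g) (k : ℕ) : X ^ (m + k) ∣ g' ^ k - g ^ k := by
  rcases k with _ | k
  · simp
  rw [← geom_sum₂_mul, show m + (k + 1) = k + (m + 1) by omega, pow_add]
  exact mul_dvd_mul (X_pow_dvd_geom_sum₂ hg hg' k) hgg'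

theorem coeff_pow_sub_pow {g g' : R⟦X⟧} {m : ℕ} (hm : 1 ≤ m) (hg : X ∣ g) (hg' : X ∣ g')
    (hgg' : X ^ (m + 1) ∣ g' - g) (k : ℕ) :
    coeff (m + k) (g' ^ k - g ^ k) = k * coeff 1 g ^ (k - 1) * coeff (m + 1) (g' - g) := by
  rcases k with _ | k
  · simp
  have hc : coeff 1 g' = coeff 1 g := by
    rw [← sub_eq_zero, ← map_sub]
    exact X_pow_dvd_iff.1 hgg' 1 (by omega)
  have hterm : ∀ i ∈ Finset.range (k + 1),
      coeff k (g' ^ i * g ^ (k + 1 - 1 - i)) = coeff 1 g ^ k := by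
    intro i hi
    obtain ⟨j, rfl⟩ := Nat.exists_eq_add_of_le (Finset.mem_range_succ_iff.1 hi)
    rw [show i + j + 1 - 1 - i = j by omega,
      coeff_add_mul_of_X_pow_dvd (pow_dvd_pow_of_dvd hg' i) (pow_dvd_pow_of_dvd hg j),
      coeff_self_pow_of_X_dvd hg', coeff_self_pow_of_X_dvd hg, hc, pow_add]
  rw [← geom_sum₂_mul, show m + (k + 1) = k + (m + 1) by omega,
    coeff_add_mul_of_X_pow_dvd (X_pow_dvd_geom_sum₂ hg hg' k) hgg', map_sum,
    Finset.sum_congr rfl hterm]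
  simp

theorem X_pow_dvd_mk_coeff_sub {f : ℕ → R⟦X⟧} (hf : ∀ m, X ^ (m + 1) ∣ f (m + 1) - f m) (m : ℕ) :
    X ^ (m + 1) ∣ mk (fun n => coeff n (f n)) - f m := by
  have hle : ∀ m m', m ≤ m' → X ^ (m + 1) ∣ f m' - f m := by
    intro m m' h
    induction m', h using Nat.le_induction with
    | base => simp
    | succ m' h ih =>
      rw [← sub_add_sub_cancel]
      exact dvd_add ((pow_dvd_pow X (by omega)).trans (hf m')) ih
  refine X_pow_dvd_iff.2 fun j hj => ?_
  rw [map_sub, coeff_mk, sub_eq_zero, eq_comm, ← sub_eq_zero, ← map_sub]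
  exact X_pow_dvd_iff.1 (hle j m (by omega)) j (by omega)

end PowerSeries

open PowerSeries

section Pscomp

variable {φ g g' : ℂ⟦X⟧} {ν : ℕ}

theorem coeff_pscomp (f g : ℂ⟦X⟧) (n : ℕ) :
    coeff n (pscomp f g) = ∑ k ∈ Finset.range (n + 1), coeff k f * coeff n (g ^ k) :=
  coeff_mk _ _

theorem coeff_pscomp_of_le (hφ : ∀ j < ν, coeff j φ = 0) (hg : X ∣ g) {n : ℕ} (hn : n ≤ ν) :
    coeff n (pscomp φ g) = coeff n φ * coeff 1 g ^ n := by
  rw [coeff_pscomp, Finset.sum_eq_single_of_mem n (Finset.self_mem_range_succ n),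
    coeff_self_pow_of_X_dvd hg]
  intro k hk hkn
  rw [hφ k (by grind), zero_mul]

theorem coeff_pscomp_sub_pscomp {m n : ℕ} (hφ : ∀ j < ν, coeff j φ = 0) (hg : X ∣ g)
    (hg' : X ∣ g') (hgg' : X ^ (m + 1) ∣ g' - g) (hn : n ≤ ν + m) :
    coeff n (pscomp φ g') - coeff n (pscomp φ g) = coeff ν φ * coeff n (g' ^ ν - g ^ ν) := by
  have hvanish : ∀ k, n < m + k → coeff n (g' ^ k - g ^ k) = 0 := fun k hk =>
    X_pow_dvd_iff.1 (X_pow_dvd_pow_sub_pow hg hg' hgg' k) n hk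
  simp_rw [coeff_pscomp, ← Finset.sum_sub_distrib, ← mul_sub, ← map_sub]
  refine Finset.sum_eq_single ν (fun k _ hkν => ?_) (fun hν => ?_)
  · rcases lt_or_gt_of_ne hkν with hk | hk
    · rw [hφ k hk, zero_mul]
    · rw [hvanish k (by omega), mul_zero]
  · rw [hvanish ν (by grind), mul_zero]

theorem coeff_pscomp_eq_of_X_pow_dvd_sub {m n : ℕ} (hφ : ∀ j < ν, coeff j φ = 0) (hg : X ∣ g)
    (hg' : X ∣ g') (hgg' : X ^ (m + 1) ∣ g' - g) (hn : n < ν + m) :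
    coeff n (pscomp φ g') = coeff n (pscomp φ g) := by
  rw [← sub_eq_zero, coeff_pscomp_sub_pscomp hφ hg hg' hgg' hn.le,
    X_pow_dvd_iff.1 (X_pow_dvd_pow_sub_pow hg hg' hgg' ν) n (by omega), mul_zero]

theorem coeff_add_pscomp_sub_pscomp {m : ℕ} (hm : 1 ≤ m) (hφ : ∀ j < ν, coeff j φ = 0)
    (hg : X ∣ g) (hg' : X ∣ g') (hgg' : X ^ (m + 1) ∣ g' - g) :
    coeff (ν + m) (pscomp φ g') - coeff (ν + m) (pscomp φ g) =
      ν * coeff ν φ * coeff 1 g ^ (ν - 1) * coeff (m + 1) (g' - g) := by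
  rw [coeff_pscomp_sub_pscomp hφ hg hg' hgg' le_rfl, add_comm ν m,
    coeff_pow_sub_pow hm hg hg' hgg']
  ring

theorem pow_eq_one_of_pscomp_eq_self (hνne : coeff ν φ ≠ 0) (hφ : ∀ j < ν, coeff j φ = 0)
    (hg : X ∣ g) (hcomp : pscomp φ g = φ) : coeff 1 g ^ ν = 1 := by
  have h := coeff_pscomp_of_le hφ hg le_rfl
  rw [hcomp] at h
  exact (mul_right_eq_self₀.1 h.symm).resolve_right hνne

theorem eq_of_pscomp_eq_self (hν1 : 1 ≤ ν) (hνne : coeff ν φ ≠ 0) (hφ : ∀ j < ν, coeff j φ = 0)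
    (hg : X ∣ g) (hg' : X ∣ g') (hc : coeff 1 g' = coeff 1 g) (hc0 : coeff 1 g ≠ 0)
    (hcomp : pscomp φ g = φ) (hcomp' : pscomp φ g' = φ) : g' = g := by
  have hdvd : ∀ m, X ^ (m + 1) ∣ g' - g := by
    intro m
    induction m with
    | zero => simpa using dvd_sub hg' hg
    | succ m ih =>
      have hcoeff : coeff (m + 1) (g' - g) = 0 := by
        rcases Nat.eq_zero_or_pos m with rfl | hm
        · rw [map_sub, hc, sub_self]
        · have h := coeff_add_pscomp_sub_pscomp hm hφ hg hg' ih
          rw [hcomp, hcomp', sub_self, eq_comm] at h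
          simpa [hνne, hc0, show ν ≠ 0 by omega] using h
      refine X_pow_dvd_iff.2 fun j hj => ?_
      rcases Nat.lt_succ_iff_lt_or_eq.1 hj with hj | rfl
      · exact X_pow_dvd_iff.1 ih j hj
      · exact hcoeff
  rw [← sub_eq_zero]
  ext n
  simpa using X_pow_dvd_iff.1 (hdvd n) n (by omega)

-- The correction is chosen so that, by `coeff_add_pscomp_sub_pscomp`, the composition becomes
-- correct in degree `ν + (m + 1)`.
noncomputable def invariantApprox (φ : ℂ⟦X⟧) (ν : ℕ) (c : ℂ) : ℕ → ℂ⟦X⟧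
  | 0 => C c * X
  | m + 1 => invariantApprox φ ν c m +
      C ((coeff (ν + (m + 1)) φ - coeff (ν + (m + 1)) (pscomp φ (invariantApprox φ ν c m))) /
        (ν * coeff ν φ * c ^ (ν - 1))) * X ^ (m + 2)

variable {c : ℂ}

theorem X_pow_dvd_invariantApprox_succ_sub (m : ℕ) :
    X ^ (m + 2) ∣ invariantApprox φ ν c (m + 1) - invariantApprox φ ν c m := by
  simp [invariantApprox]

theorem X_dvd_invariantApprox (m : ℕ) : X ∣ invariantApprox φ ν c m := by
  induction m with
  | zero => exact dvd_mul_left X _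
  | succ m ih => exact dvd_add ih (dvd_mul_of_dvd_right (dvd_pow_self X (by omega)) _)

theorem coeff_one_invariantApprox (m : ℕ) : coeff 1 (invariantApprox φ ν c m) = c := by
  induction m with
  | zero => simp [invariantApprox]
  | succ m ih => simp [invariantApprox, ih, coeff_X_pow]

theorem coeff_pscomp_invariantApprox (hν1 : 1 ≤ ν) (hνne : coeff ν φ ≠ 0)
    (hφ : ∀ j < ν, coeff j φ = 0) (hc : c ^ ν = 1) (m : ℕ) :
    ∀ n ≤ ν + m, coeff n (pscomp φ (invariantApprox φ ν c m)) = coeff n φ := by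
  induction m with
  | zero =>
    intro n hn
    rw [coeff_pscomp_of_le hφ (X_dvd_invariantApprox 0) hn, coeff_one_invariantApprox 0]
    rcases Nat.lt_or_eq_of_le hn with hn | rfl
    · rw [hφ n hn, zero_mul]
    · rw [hc, mul_one]
  | succ m ih =>
    have hX := X_dvd_invariantApprox (φ := φ) (ν := ν) (c := c)
    have hdvd := X_pow_dvd_invariantApprox_succ_sub (φ := φ) (ν := ν) (c := c) m
    intro n hn
    rcases Nat.lt_or_eq_of_le hn with hn | rfl
    · rw [coeff_pscomp_eq_of_X_pow_dvd_sub hφ (hX m) (hX (m + 1)) hdvd hn]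
      exact ih n (by omega)
    · have h := coeff_add_pscomp_sub_pscomp (by omega) hφ (hX m) (hX (m + 1)) hdvd
      have hD : (ν : ℂ) * coeff ν φ * c ^ (ν - 1) ≠ 0 := by
        have hc0 : c ≠ 0 := ne_zero_pow (n := ν) (by omega) (by simp [hc])
        simp [hνne, hc0, show ν ≠ 0 by omega]
      rw [coeff_one_invariantApprox m, invariantApprox, add_sub_cancel_left, coeff_C_mul_X_pow,
        if_pos rfl, mul_div_cancel₀ _ hD, sub_left_inj] at h
      exact h

theorem exists_pscomp_eq_self (hν1 : 1 ≤ ν) (hνne : coeff ν φ ≠ 0)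
    (hφ : ∀ j < ν, coeff j φ = 0) (hc : c ^ ν = 1) :
    ∃ g : ℂ⟦X⟧, X ∣ g ∧ coeff 1 g = c ∧ pscomp φ g = φ := by
  set g := mk fun n => coeff n (invariantApprox φ ν c n)
  have hlim (m : ℕ) : X ^ (m + 1) ∣ g - invariantApprox φ ν c m :=
    X_pow_dvd_mk_coeff_sub
      (fun m => (pow_dvd_pow X (by omega)).trans (X_pow_dvd_invariantApprox_succ_sub m)) m
  have hg : X ∣ g := (dvd_sub_left (X_dvd_invariantApprox 0)).1 (by simpa using hlim 0)
  refine ⟨g, hg, ?_, ?_⟩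
  · have h := X_pow_dvd_iff.1 (hlim 1) 1 (by omega)
    rwa [map_sub, coeff_one_invariantApprox, sub_eq_zero] at h
  · ext n
    rw [coeff_pscomp_eq_of_X_pow_dvd_sub hφ (X_dvd_invariantApprox n) hg (hlim n) (by omega),
      coeff_pscomp_invariantApprox hν1 hνne hφ hc n n (by omega)]

end Pscomp

def formalInvGroup (φ : ℂ⟦X⟧) : Set ℂ⟦X⟧ :=
  {g | coeff 0 g = 0 ∧ coeff 1 g ≠ 0 ∧ pscomp φ g = φ}

section FormalInvGroup

variable {φ : ℂ⟦X⟧} {ν : ℕ}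

theorem injOn_coeff_one_formalInvGroup (hν1 : 1 ≤ ν) (hνne : coeff ν φ ≠ 0)
    (hφ : ∀ j < ν, coeff j φ = 0) : Set.InjOn (coeff 1) (formalInvGroup φ) :=
  fun _ ⟨hg0, _, hg⟩ _ ⟨hg0', hc0', hg'⟩ hc =>
    eq_of_pscomp_eq_self hν1 hνne hφ (X_dvd_iff_coeff_zero.2 hg0') (X_dvd_iff_coeff_zero.2 hg0)
      hc hc0' hg' hg

theorem image_coeff_one_formalInvGroup (hν1 : 1 ≤ ν) (hνne : coeff ν φ ≠ 0)
    (hφ : ∀ j < ν, coeff j φ = 0) :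
    coeff 1 '' formalInvGroup φ = Polynomial.nthRootsFinset ν (1 : ℂ) := by
  ext c
  rw [Finset.mem_coe, Polynomial.mem_nthRootsFinset (by omega)]
  constructor
  · rintro ⟨g, ⟨hg0, _, hg⟩, rfl⟩
    exact pow_eq_one_of_pscomp_eq_self hνne hφ (X_dvd_iff_coeff_zero.2 hg0) hg
  · intro hc
    obtain ⟨g, hg0, rfl, hg⟩ := exists_pscomp_eq_self hν1 hνne hφ hc
    have hc0 : coeff 1 g ≠ 0 := ne_zero_pow (n := ν) (by omega) (by simp [hc])
    exact ⟨g, ⟨X_dvd_iff_coeff_zero.1 hg0, hc0, hg⟩, rfl⟩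

end FormalInvGroup

theorem formal_invariance_group_finite_general (φ : PowerSeries ℂ) (ν : ℕ)
    (hν1 : 1 ≤ ν) (hνne : PowerSeries.coeff ν φ ≠ 0)
    (hνmin : ∀ j < ν, PowerSeries.coeff j φ = 0) :
    {g : PowerSeries ℂ | PowerSeries.coeff 0 g = 0 ∧ PowerSeries.coeff 1 g ≠ 0 ∧
        pscomp φ g = φ}.Finite ∧
      {g : PowerSeries ℂ | PowerSeries.coeff 0 g = 0 ∧ PowerSeries.coeff 1 g ≠ 0 ∧
        pscomp φ g = φ}.ncard = ν := by
  change (formalInvGroup φ).Finite ∧ (formalInvGroup φ).ncard = ν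
  have hinj := injOn_coeff_one_formalInvGroup hν1 hνne hνmin
  have himage := image_coeff_one_formalInvGroup hν1 hνne hνmin
  refine ⟨Set.Finite.of_finite_image (himage ▸ Finset.finite_toSet _) hinj, ?_⟩
  rw [← hinj.ncard_image, himage, Set.ncard_coe_finset,
    (Complex.isPrimitiveRoot_exp ν (by omega)).card_nthRootsFinset]

/-- The formal invariance group of a nonzero formal power series `φ̂` of order `ν`
(vanishing constant term) is finite, of cardinality exactly `ν`. -/
theorem formal_invariance_group_finite (φ : PowerSeries ℂ) (ν : ℕ)
    (h0 : PowerSeries.coeff 0 φ = 0) (hφ : φ ≠ 0)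
    (hν1 : 1 ≤ ν) (hνne : PowerSeries.coeff ν φ ≠ 0)
    (hνmin : ∀ j < ν, PowerSeries.coeff j φ = 0) :
    {g : PowerSeries ℂ | PowerSeries.coeff 0 g = 0 ∧ PowerSeries.coeff 1 g ≠ 0 ∧
        pscomp φ g = φ}.Finite ∧
      {g : PowerSeries ℂ | PowerSeries.coeff 0 g = 0 ∧ PowerSeries.coeff 1 g ≠ 0 ∧
        pscomp φ g = φ}.ncard = ν :=
  formal_invariance_group_finite_general φ ν hν1 hνne hνmin
end

section
/- For x ∈ ℂ with Re(x) > 0, define E(x) = ∫_0^{+∞} e^{−ξ/x}/(1 + ξ) dξ. Then E admits the Euler series Σ_{n=0}^∞ (−1)^n n! x^{n+1} as asymptotic expansion on the right half-plane in the following sense: for every real number c with 0 < c ≤ 1 and every k ∈ ℕ there exists a constant A > 0 such that |E(x) − Σ_{n=0}^{k−1} (−1)^n n! x^{n+1}| ≤ A·|x|^{k+1} for every x ∈ ℂ ∖ {0} with Re(x) ≥ c·|x|. -/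
/-!
With `b = x⁻¹` the Euler function is the Laplace transform `∫₀^∞ e^{-bξ}/(1+ξ) dξ`, and
`Re b = Re x / |x|² ≥ c / |x|` on the sector. Expanding `1/(1+ξ)` as a finite geometric sum with
exact remainder `(-ξ)^k/(1+ξ)` and integrating term by term against the moments
`∫₀^∞ ξⁿ e^{-bξ} dξ = n!/bⁿ⁺¹ = n! xⁿ⁺¹` leaves the error `∫₀^∞ (-ξ)^k e^{-bξ}/(1+ξ) dξ`,
whose norm is at most `∫₀^∞ ξ^k e^{-(Re b)ξ} dξ = k!/(Re b)^{k+1} ≤ (k!/c^{k+1}) |x|^{k+1}`.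
-/

open MeasureTheory Set Filter Complex
open scoped Nat Topology

lemma integrableOn_pow_mul_exp_neg_mul (n : ℕ) {r : ℝ} (hr : 0 < r) :
    IntegrableOn (fun t : ℝ => t ^ n * Real.exp (-r * t)) (Ioi 0) := by
  simpa [Real.rpow_natCast] using
    integrableOn_rpow_mul_exp_neg_mul_rpow (p := 1) (s := n) (by linarith [n.cast_nonneg (α := ℝ)])
      one_pos hr

lemma norm_pow_mul_cexp_neg_mul (n : ℕ) (b : ℂ) {t : ℝ} (ht : 0 ≤ t) :
    ‖(t : ℂ) ^ n * cexp (-b * t)‖ = t ^ n * Real.exp (-b.re * t) := by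
  simp [norm_exp, abs_of_nonneg ht]

lemma integrableOn_pow_mul_cexp_neg_mul (n : ℕ) {b : ℂ} (hb : 0 < b.re) :
    IntegrableOn (fun t : ℝ => (t : ℂ) ^ n * cexp (-b * t)) (Ioi 0) := by
  refine (integrableOn_pow_mul_exp_neg_mul n hb).mono' (by fun_prop) ?_
  filter_upwards [ae_restrict_mem measurableSet_Ioi] with t ht
  exact (norm_pow_mul_cexp_neg_mul n b (le_of_lt ht)).le

lemma tendsto_pow_mul_cexp_neg_mul_atTop (n : ℕ) {b : ℂ} (hb : 0 < b.re) :
    Tendsto (fun t : ℝ => (t : ℂ) ^ n * cexp (-b * t)) atTop (𝓝 0) := by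
  refine squeeze_zero_norm' ?_ (tendsto_rpow_mul_exp_neg_mul_atTop_nhds_zero n b.re hb)
  filter_upwards [eventually_ge_atTop 0] with t ht
  rw [norm_pow_mul_cexp_neg_mul n b ht, Real.rpow_natCast]

lemma hasDerivAt_pow_succ_mul_cexp_neg_mul (n : ℕ) (b : ℂ) (t : ℝ) :
    HasDerivAt (fun t : ℝ => (t : ℂ) ^ (n + 1) * cexp (-b * t))
      ((n + 1) * ((t : ℂ) ^ n * cexp (-b * t)) - b * ((t : ℂ) ^ (n + 1) * cexp (-b * t))) t := by
  have hexp : HasDerivAt (fun z : ℂ => cexp (-b * z)) (cexp (-b * t) * -b) t := by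
    simpa using ((hasDerivAt_id (t : ℂ)).const_mul (-b)).cexp
  exact (((hasDerivAt_pow (n + 1) (t : ℂ)).mul hexp).comp_ofReal).congr_deriv (by push_cast; ring)

theorem integral_pow_mul_cexp_neg_mul (n : ℕ) {b : ℂ} (hb : 0 < b.re) :
    ∫ t in Ioi (0 : ℝ), (t : ℂ) ^ n * cexp (-b * t) = n ! / b ^ (n + 1) := by
  have hb0 : b ≠ 0 := by rintro rfl; simp at hb
  induction n with
  | zero =>
    simpa [neg_div_neg_eq] using integral_exp_mul_complex_Ioi (a := -b) (by simpa) 0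
  | succ n ih =>
    have hibp := integral_Ioi_of_hasDerivAt_of_tendsto (by fun_prop)
      (fun t _ => hasDerivAt_pow_succ_mul_cexp_neg_mul n b t)
      (((integrableOn_pow_mul_cexp_neg_mul n hb).const_mul _).sub
        ((integrableOn_pow_mul_cexp_neg_mul (n + 1) hb).const_mul b))
      (tendsto_pow_mul_cexp_neg_mul_atTop (n + 1) hb)
    rw [integral_sub ((integrableOn_pow_mul_cexp_neg_mul n hb).const_mul _)
        ((integrableOn_pow_mul_cexp_neg_mul (n + 1) hb).const_mul b),
      integral_const_mul, integral_const_mul, ih, ofReal_zero, zero_pow n.succ_ne_zero,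
      zero_mul, sub_zero] at hibp
    set I := ∫ t in Ioi (0 : ℝ), (t : ℂ) ^ (n + 1) * cexp (-b * t)
    rw [eq_div_iff (pow_ne_zero _ hb0)]
    field_simp at hibp
    push_cast [Nat.factorial_succ]
    linear_combination -hibp

theorem integral_pow_mul_exp_neg_mul (n : ℕ) {r : ℝ} (hr : 0 < r) :
    ∫ t in Ioi (0 : ℝ), t ^ n * Real.exp (-r * t) = n ! / r ^ (n + 1) := by
  have h := integral_pow_mul_cexp_neg_mul n (b := r) (by simpa)
  rw [← Complex.ofReal_inj]
  push_cast
  rw [← h, ← integral_complex_ofReal]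
  push_cast
  rfl

lemma inv_one_add_eq_sum_add {K : Type*} [Field K] {z : K} (hz : 1 + z ≠ 0) (k : ℕ) :
    (1 + z)⁻¹ = ∑ n ∈ Finset.range k, (-z) ^ n + (-z) ^ k / (1 + z) := by
  have h := geom_sum_mul (-z) k
  field_simp
  linear_combination h

lemma one_add_ofReal_ne_zero {t : ℝ} (ht : 0 ≤ t) : (1 + t : ℂ) ≠ 0 := by
  rw [← ofReal_one, ← ofReal_add, ofReal_ne_zero]
  linarith

lemma norm_neg_pow_mul_cexp_neg_mul_div_one_add_le (n : ℕ) (b : ℂ) {t : ℝ} (ht : 0 ≤ t) :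
    ‖(-t : ℂ) ^ n * cexp (-b * t) / (1 + t)‖ ≤ t ^ n * Real.exp (-b.re * t) := by
  have h1 : 1 ≤ ‖(1 + t : ℂ)‖ := by
    rw [← ofReal_one, ← ofReal_add, norm_real, Real.norm_of_nonneg (by linarith)]
    linarith
  rw [norm_div, neg_pow, mul_assoc, norm_mul, norm_pow, norm_neg, norm_one, one_pow, one_mul,
    norm_pow_mul_cexp_neg_mul n b ht]
  exact div_le_self (by positivity) h1

lemma integrableOn_neg_pow_mul_cexp_neg_mul_div_one_add (n : ℕ) {b : ℂ} (hb : 0 < b.re) :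
    IntegrableOn (fun t : ℝ => (-t : ℂ) ^ n * cexp (-b * t) / (1 + t)) (Ioi 0) := by
  refine (integrableOn_pow_mul_exp_neg_mul n hb).mono' ?_ ?_
  · refine ContinuousOn.aestronglyMeasurable (ContinuousOn.div (by fun_prop) (by fun_prop)
      fun t ht => one_add_ofReal_ne_zero (le_of_lt ht)) measurableSet_Ioi
  · filter_upwards [ae_restrict_mem measurableSet_Ioi] with t ht
    exact norm_neg_pow_mul_cexp_neg_mul_div_one_add_le n b (le_of_lt ht)

theorem integral_cexp_neg_mul_div_one_add_sub_sum (k : ℕ) {b : ℂ} (hb : 0 < b.re) :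
    (∫ t in Ioi (0 : ℝ), cexp (-b * t) / (1 + t)) -
        ∑ n ∈ Finset.range k, (-1) ^ n * n ! / b ^ (n + 1) =
      ∫ t in Ioi (0 : ℝ), (-t : ℂ) ^ k * cexp (-b * t) / (1 + t) := by
  have hneg (n : ℕ) : (fun t : ℝ => (-t : ℂ) ^ n * cexp (-b * t)) =
      fun t : ℝ => (-1) ^ n * ((t : ℂ) ^ n * cexp (-b * t)) := funext fun t => by ring
  have hmoment (n : ℕ) : ∫ t in Ioi (0 : ℝ), (-t : ℂ) ^ n * cexp (-b * t) =
      (-1) ^ n * n ! / b ^ (n + 1) := by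
    rw [hneg, integral_const_mul, integral_pow_mul_cexp_neg_mul n hb, mul_div_assoc]
  have hint (n : ℕ) : IntegrableOn (fun t : ℝ => (-t : ℂ) ^ n * cexp (-b * t)) (Ioi 0) := by
    rw [hneg]
    exact (integrableOn_pow_mul_cexp_neg_mul n hb).const_mul _
  simp_rw [← hmoment]
  rw [← integral_finsetSum _ fun n _ => hint n, ← integral_sub
    (by simpa only [pow_zero, one_mul, IntegrableOn] using
      integrableOn_neg_pow_mul_cexp_neg_mul_div_one_add 0 hb)
    (integrable_finsetSum _ fun n _ => hint n)]
  refine setIntegral_congr_fun measurableSet_Ioi fun t ht => ?_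
  simp only [div_eq_mul_inv (cexp _),
    inv_one_add_eq_sum_add (one_add_ofReal_ne_zero (le_of_lt ht)) k, ← Finset.sum_mul]
  ring

theorem norm_integral_cexp_neg_mul_div_one_add_sub_sum_le (k : ℕ) {b : ℂ} (hb : 0 < b.re) :
    ‖(∫ t in Ioi (0 : ℝ), cexp (-b * t) / (1 + t)) -
        ∑ n ∈ Finset.range k, (-1) ^ n * n ! / b ^ (n + 1)‖ ≤ k ! / b.re ^ (k + 1) := by
  rw [integral_cexp_neg_mul_div_one_add_sub_sum k hb, ← integral_pow_mul_exp_neg_mul k hb]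
  refine norm_integral_le_of_norm_le (integrableOn_pow_mul_exp_neg_mul k hb) ?_
  filter_upwards [ae_restrict_mem measurableSet_Ioi] with t ht
  exact norm_neg_pow_mul_cexp_neg_mul_div_one_add_le k b (le_of_lt ht)

lemma div_norm_le_re_inv {c : ℝ} {x : ℂ} (hx : x ≠ 0) (hcx : c * ‖x‖ ≤ x.re) :
    c / ‖x‖ ≤ x⁻¹.re := by
  have hx' : 0 < ‖x‖ := norm_pos_iff.mpr hx
  rw [inv_re, normSq_eq_norm_sq, div_le_div_iff₀ hx' (by positivity)]
  nlinarith

/-- The Euler function `E(x) = ∫₀^∞ e^{-ξ/x}/(1+ξ) dξ` admits the Euler series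
`Σ (-1)ⁿ n! x^{n+1}` as asymptotic expansion on every closed subsector
`{Re x ≥ c|x|}` of the right half-plane. -/
theorem euler_function_asymptotic_expansion :
    ∀ c : ℝ, 0 < c → c ≤ 1 → ∀ k : ℕ, ∃ A : ℝ, 0 < A ∧
      ∀ x : ℂ, x ≠ 0 → c * ‖x‖ ≤ x.re →
        ‖(∫ ξ in Set.Ioi (0 : ℝ), Complex.exp (-(ξ : ℂ) / x) / (1 + (ξ : ℂ))) -
            ∑ n ∈ Finset.range k, (-1 : ℂ) ^ n * (n.factorial : ℂ) * x ^ (n + 1)‖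
          ≤ A * ‖x‖ ^ (k + 1) := by
  intro c hc _ k
  refine ⟨k ! / c ^ (k + 1), by positivity, fun x hx hcx => ?_⟩
  have hre := div_norm_le_re_inv hx hcx
  have hb : 0 < x⁻¹.re := lt_of_lt_of_le (div_pos hc (norm_pos_iff.mpr hx)) hre
  have hE : ∀ ξ : ℝ, cexp (-(ξ : ℂ) / x) = cexp (-x⁻¹ * ξ) := fun ξ => by ring_nf
  have hsum : ∀ n : ℕ, (-1 : ℂ) ^ n * n ! * x ^ (n + 1) = (-1) ^ n * n ! / x⁻¹ ^ (n + 1) :=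
    fun n => by rw [inv_pow, div_inv_eq_mul]
  simp only [hE, hsum]
  calc _ ≤ k ! / x⁻¹.re ^ (k + 1) := norm_integral_cexp_neg_mul_div_one_add_sub_sum_le k hb
    _ ≤ k ! / (c / ‖x‖) ^ (k + 1) := by gcongr
    _ = k ! / c ^ (k + 1) * ‖x‖ ^ (k + 1) := by rw [div_pow, div_div_eq_mul_div, mul_div_right_comm]
end
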